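/- arXiv:1910.00799 — 3 statements merged into one kernel-verified Lean document; each statement's English description precedes it below -/
import Mathlib

section
/- Let μ be a probability measure on ℝ^d with finite second moment and let Γ^(N) ⊂ ℝ^d be an L²-optimal quantization grid at level N, i.e. a set of at most N points with e_2(Γ^(N),μ) = e_{2,N}(μ) := inf{e_2(Γ,μ) : Γ ⊂ ℝ^d finite, |Γ| ≤ N}. Then the pushforward μ̂^N = μ ∘ Proj_{Γ^(N)}^{-1} under a Borel nearest-neighbour projection onto Γ^(N) satisfies: μ̂^N is supported on at most N points, μ̂^N ≤_cvx μ, and W_2(μ, μ̂^N) = inf{W_2(μ,ν) : ν a probability measure on ℝ^d supported on at most N points with ν ≤_cvx μ}; i.e. μ̂^N is a quadratic-Wasserstein projection of μ on the set of probability measures dominated by μ in the convex order whose support contains at most N elements. -/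
open MeasureTheory Metric
open scoped ENNReal

noncomputable section

abbrev Euc (d : ℕ) : Type := EuclideanSpace ℝ (Fin d)

/-- The Wasserstein "distance" of index `p`: infimum over couplings of the `p`-cost. -/
def Wp {d : ℕ} (p : ℝ) (μ ν : Measure (Euc d)) : ℝ :=
  sInf { r | ∃ M : Measure (Euc d × Euc d), IsProbabilityMeasure M ∧ M.fst = μ ∧ M.snd = ν ∧
      r = (∫ z, ‖z.1 - z.2‖ ^ p ∂M) ^ (1/p) }

/-- Quadratic quantization error of the grid `Γ` for `μ`. -/
def e2 {d : ℕ} (Γ : Finset (Euc d)) (μ : Measure (Euc d)) : ℝ :=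
  (∫ x, infDist x (Γ : Set (Euc d)) ^ 2 ∂μ) ^ (1/2 : ℝ)

/-- Optimal quadratic quantization error at level `N`. -/
def e2N {d : ℕ} (N : ℕ) (μ : Measure (Euc d)) : ℝ :=
  sInf { r | ∃ Γ : Finset (Euc d), Γ.Nonempty ∧ Γ.card ≤ N ∧ r = e2 Γ μ }

/-- `ν` is supported on at most `N` points. -/
def supportedOnAtMost {d : ℕ} (ν : Measure (Euc d)) (N : ℕ) : Prop :=
  ∃ s : Finset (Euc d), s.card ≤ N ∧ ν (((s : Set (Euc d)))ᶜ) = 0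

/-- Convex order `μ ≤_cvx ν` (tested on convex functions with linear growth). -/
def cvxOrder {d : ℕ} (μ ν : Measure (Euc d)) : Prop :=
  ∀ φ : Euc d → ℝ, ConvexOn ℝ Set.univ φ → (∃ C : ℝ, ∀ x, |φ x| ≤ C * (1 + ‖x‖)) →
    ∫ x, φ x ∂μ ≤ ∫ x, φ x ∂ν

/-!
Split space into the cells `proj ⁻¹' {a}`, `a ∈ Γ`. Moving each `a` by the first moment of its
cell about `a` lowers the distortion by the squared norm of that moment, so optimality of `Γ`
forces every cell to have barycentre `a`; Jensen's inequality on each cell then gives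
`μ.map proj ≤_cvx μ`. Every coupling of `μ` with a measure carried by a finite set `s` costs at
least the distortion of `s`, so `W₂(μ, ν) ≥ e₂(s, μ) ≥ e₂(Γ, μ)` for every admissible `ν`, while
the coupling `x ↦ (x, proj x)` shows `W₂(μ, μ.map proj) = e₂(Γ, μ)`.
-/

open scoped RealInnerProductSpace

theorem MeasureTheory.MemLp.integrable_infDist_sq {E : Type*} [NormedAddCommGroup E]
    [MeasurableSpace E] {ρ : Measure E} [IsFiniteMeasure ρ] (hρ : MemLp id 2 ρ) {s : Set E}
    (hs : s.Nonempty) : Integrable (fun x => infDist x s ^ 2) ρ := by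
  obtain ⟨a, ha⟩ := hs
  refine ((hρ.sub (memLp_const a)).integrable_norm_pow' (p := 2)).mono'
    (((continuous_infDist_pt s).pow 2).comp_aestronglyMeasurable hρ.1) (.of_forall fun x => ?_)
  rw [Real.norm_of_nonneg (by positivity), Pi.sub_apply, id, ← dist_eq_norm]
  exact pow_le_pow_left₀ infDist_nonneg (infDist_le_dist_of_mem ha) 2

theorem MeasureTheory.integral_eq_sum_setIntegral_fiber {α β G : Type*} [MeasurableSpace α]
    [MeasurableSpace β] [MeasurableSingletonClass β] [NormedAddCommGroup G] [NormedSpace ℝ G]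
    {μ : Measure α} {g : α → β} (hg : Measurable g) {s : Finset β} (hs : ∀ x, g x ∈ s)
    {f : α → G} (hf : Integrable f μ) :
    ∫ x, f x ∂μ = ∑ b ∈ s, ∫ x in g ⁻¹' {b}, f x ∂μ := by
  have hcover : (⋃ b ∈ s, g ⁻¹' {b}) = Set.univ :=
    Set.eq_univ_of_forall fun x => Set.mem_biUnion (hs x) rfl
  rw [← setIntegral_univ, ← hcover]
  exact integral_biUnion_finset s (fun b _ => hg (measurableSet_singleton b))
    (Set.pairwiseDisjoint_fiber g _) fun b _ => hf.integrableOn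

theorem MeasureTheory.Measure.map_compl_eq_zero_of_forall_mem {α β : Type*} [MeasurableSpace α]
    [MeasurableSpace β] {μ : Measure α} {f : α → β} (hf : Measurable f) {s : Set β}
    (hs : MeasurableSet s) (h : ∀ x, f x ∈ s) : μ.map f sᶜ = 0 := by
  have hpre : f ⁻¹' s = Set.univ := Set.eq_univ_of_forall h
  rw [Measure.map_apply hf hs.compl, Set.preimage_compl, hpre, Set.compl_univ, measure_empty]

section Cells

variable {E : Type*} [NormedAddCommGroup E] [NormedSpace ℝ E] [MeasurableSpace E]

/-- `E(X | proj X) = proj X` for `X ∼ μ`, written cell by cell. -/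
def IsStationaryProjection (μ : Measure E) (proj : E → E) : Prop :=
  ∀ a, ∫ x in proj ⁻¹' {a}, x ∂μ = μ.real (proj ⁻¹' {a}) • a

def cellMoment (μ : Measure E) (proj : E → E) (a : E) : E :=
  ∫ x in proj ⁻¹' {a}, x ∂μ - μ.real (proj ⁻¹' {a}) • a

end Cells

section InnerProductSpace

variable {E : Type*} [NormedAddCommGroup E] [InnerProductSpace ℝ E] [CompleteSpace E]
  [MeasurableSpace E] {ρ : Measure E} [IsFiniteMeasure ρ]

theorem integral_norm_sub_sq_eq (hρ : MemLp id 2 ρ) (a c : E) :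
    ∫ x, ‖x - c‖ ^ 2 ∂ρ = ∫ x, ‖x - a‖ ^ 2 ∂ρ
      - 2 * ⟪c - a, ∫ x, x ∂ρ - ρ.real Set.univ • a⟫ + ρ.real Set.univ * ‖c - a‖ ^ 2 := by
  have hid : Integrable (fun x => x) ρ := hρ.integrable one_le_two
  have hsq : Integrable (fun x => ‖x - a‖ ^ 2) ρ :=
    (hρ.sub (memLp_const a)).integrable_norm_pow' (p := 2)
  have hcentred : Integrable (fun x => x - a) ρ := hid.sub (integrable_const a)
  have hinner : Integrable (fun x => ⟪c - a, x - a⟫) ρ := hcentred.const_inner (c - a)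
  have hexpand : ∀ x : E, ‖x - c‖ ^ 2 = ‖x - a‖ ^ 2 - 2 * ⟪c - a, x - a⟫ + ‖c - a‖ ^ 2 := by
    intro x
    rw [show x - c = (x - a) - (c - a) by abel, norm_sub_sq_real, real_inner_comm]
  have hlin : Integrable (fun x => ‖x - a‖ ^ 2 - 2 * ⟪c - a, x - a⟫) ρ :=
    hsq.sub (hinner.const_mul 2)
  simp only [hexpand]
  rw [integral_add hlin (integrable_const _),
    integral_sub hsq (hinner.const_mul 2), integral_const_mul, integral_inner hcentred,
    integral_sub hid (integrable_const a), integral_const,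
    integral_const, smul_eq_mul]

/-- Shifting `a` by the first moment of `ρ` about `a`, rather than to the barycentre, avoids
dividing by the mass; since the mass is at most `1`, the gain is at least the squared norm of that
moment. -/
theorem integral_norm_sub_sq_add_sq_le (hρ : MemLp id 2 ρ) (hρ1 : ρ.real Set.univ ≤ 1) (a : E) :
    ∫ x, ‖x - (a + (∫ y, y ∂ρ - ρ.real Set.univ • a))‖ ^ 2 ∂ρ
      + ‖∫ y, y ∂ρ - ρ.real Set.univ • a‖ ^ 2 ≤ ∫ x, ‖x - a‖ ^ 2 ∂ρ := by
  rw [integral_norm_sub_sq_eq hρ a, add_sub_cancel_left, real_inner_self_eq_norm_sq]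
  nlinarith [sq_nonneg ‖∫ y, y ∂ρ - ρ.real Set.univ • a‖]

theorem ConvexOn.measureReal_univ_mul_le_integral {φ : E → ℝ} (hφ : ConvexOn ℝ Set.univ φ)
    (hφc : Continuous φ) (hid : Integrable id ρ) (hφi : Integrable φ ρ) {a : E}
    (ha : ∫ x, x ∂ρ = ρ.real Set.univ • a) : ρ.real Set.univ * φ a ≤ ∫ x, φ x ∂ρ := by
  rcases eq_zero_or_neZero ρ with rfl | _
  · simp
  have hmass : 0 < ρ.real Set.univ := measureReal_univ_pos
  have hjensen := hφ.map_average_le hφc.continuousOn isClosed_univ (.of_forall fun _ => trivial)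
    hid hφi
  simp only [average_eq, id] at hjensen
  rw [ha, inv_smul_smul₀ hmass.ne', smul_eq_mul] at hjensen
  rwa [le_inv_mul_iff₀ hmass] at hjensen

theorem integral_infDist_sq_image_add_sum_le [OpensMeasurableSpace E] [DecidableEq E]
    {μ : Measure E} [IsProbabilityMeasure μ] (hμ : MemLp id 2 μ) {Γ : Finset E} {proj : E → E}
    (hproj : Measurable proj) (hmem : ∀ x, proj x ∈ Γ)
    (hdist : ∀ x, dist x (proj x) = infDist x Γ) :
    ∫ x, infDist x (Γ.image fun a => a + cellMoment μ proj a) ^ 2 ∂μ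
      + ∑ a ∈ Γ, ‖cellMoment μ proj a‖ ^ 2 ≤ ∫ x, infDist x Γ ^ 2 ∂μ := by
  have hcell : ∀ a, MeasurableSet (proj ⁻¹' {a}) := fun a => hproj (measurableSet_singleton a)
  have hΓ : Γ.Nonempty := ⟨proj 0, hmem 0⟩
  have hcells : ∫ x, infDist x Γ ^ 2 ∂μ = ∑ a ∈ Γ, ∫ x in proj ⁻¹' {a}, ‖x - a‖ ^ 2 ∂μ := by
    rw [integral_eq_sum_setIntegral_fiber hproj hmem (hμ.integrable_infDist_sq hΓ)]
    refine Finset.sum_congr rfl fun a _ => setIntegral_congr_fun (hcell a) fun x hx => ?_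
    rw [← hdist x, show proj x = a from hx, dist_eq_norm]
  have hint := hμ.integrable_infDist_sq (hΓ.image fun a => a + cellMoment μ proj a)
  rw [hcells, integral_eq_sum_setIntegral_fiber hproj hmem hint, ← Finset.sum_add_distrib]
  refine Finset.sum_le_sum fun a ha => ?_
  have hgain := integral_norm_sub_sq_add_sq_le (hμ.restrict (proj ⁻¹' {a}))
    (by rw [measureReal_restrict_apply_univ]; exact measureReal_le_one) a
  rw [measureReal_restrict_apply_univ] at hgain
  refine le_trans (add_le_add_left (setIntegral_mono_on hint.integrableOn ?_ (hcell a)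
    fun x _ => ?_) _) hgain
  · exact ((hμ.sub (memLp_const _)).integrable_norm_pow' (p := 2)).integrableOn
  · rw [← dist_eq_norm]
    exact pow_le_pow_left₀ infDist_nonneg
      (infDist_le_dist_of_mem (Finset.mem_coe.2 (Finset.mem_image_of_mem _ ha))) 2

theorem isStationaryProjection_of_forall_integral_infDist_sq_le [OpensMeasurableSpace E]
    {μ : Measure E} [IsProbabilityMeasure μ] (hμ : MemLp id 2 μ) {Γ : Finset E} {proj : E → E}
    (hproj : Measurable proj) (hmem : ∀ x, proj x ∈ Γ)
    (hdist : ∀ x, dist x (proj x) = infDist x Γ)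
    (hopt : ∀ Γ' : Finset E, Γ'.Nonempty → Γ'.card ≤ Γ.card →
      ∫ x, infDist x Γ ^ 2 ∂μ ≤ ∫ x, infDist x Γ' ^ 2 ∂μ) :
    IsStationaryProjection μ proj := by
  classical
  have hΓ' : (Γ.image fun a => a + cellMoment μ proj a).Nonempty :=
    ⟨_, Finset.mem_image_of_mem _ (hmem 0)⟩
  have hmoment : ∀ a ∈ Γ, ‖cellMoment μ proj a‖ ^ 2 = 0 :=
    (Finset.sum_eq_zero_iff_of_nonneg fun _ _ => sq_nonneg _).1 <| le_antisymm
      (by linarith [hopt _ hΓ' Finset.card_image_le,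
        integral_infDist_sq_image_add_sum_le hμ hproj hmem hdist])
      (by positivity)
  intro a
  by_cases ha : a ∈ Γ
  · exact sub_eq_zero.1 (norm_eq_zero.1 (pow_eq_zero_iff two_ne_zero |>.1 (hmoment a ha)))
  · have hempty : proj ⁻¹' {a} = ∅ :=
      Set.eq_empty_of_forall_notMem fun x hx => ha (Set.mem_singleton_iff.1 hx ▸ hmem x)
    simp [hempty]

end InnerProductSpace

theorem integral_infDist_sq_le_integral_norm_sub_sq {E : Type*} [NormedAddCommGroup E]
    [MeasurableSpace E] [OpensMeasurableSpace E] [SecondCountableTopology E] {μ ν : Measure E}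
    [IsFiniteMeasure μ] (hμ : MemLp id 2 μ) {s : Finset E} (hν : ν (s : Set E)ᶜ = 0)
    {M : Measure (E × E)} [IsFiniteMeasure M] (hM₁ : M.fst = μ) (hM₂ : M.snd = ν) :
    ∫ x, infDist x s ^ 2 ∂μ ≤ ∫ z, ‖z.1 - z.2‖ ^ 2 ∂M := by
  have hsnd : ∀ᵐ z ∂M, z.2 ∈ s := by
    refine ae_of_ae_map measurable_snd.aemeasurable ?_
    rw [← Measure.snd, hM₂]
    exact measure_eq_zero_iff_ae_notMem.1 hν |>.mono fun y hy => not_not.1 hy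
  have hfst_memLp : MemLp Prod.fst 2 M :=
    (memLp_map_measure_iff aestronglyMeasurable_id measurable_fst.aemeasurable).1
      (by rwa [← Measure.fst, hM₁])
  have hsnd_memLp : MemLp Prod.snd 2 M :=
    .of_bound measurable_snd.aestronglyMeasurable (∑ c ∈ s, ‖c‖)
      (hsnd.mono fun z hz => Finset.single_le_sum (f := (‖·‖)) (fun _ _ => norm_nonneg _) hz)
  have hmarginal : ∫ x, infDist x s ^ 2 ∂μ = ∫ z, infDist z.1 s ^ 2 ∂M := by
    rw [← hM₁]
    exact integral_map measurable_fst.aemeasurable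
      ((continuous_infDist_pt _).pow 2).aestronglyMeasurable
  rw [hmarginal]
  refine integral_mono_of_nonneg (.of_forall fun z => by positivity)
    ((hfst_memLp.sub hsnd_memLp).integrable_norm_pow' (p := 2)) ?_
  filter_upwards [hsnd] with z hz
  rw [← dist_eq_norm]
  exact pow_le_pow_left₀ infDist_nonneg (infDist_le_dist_of_mem hz) 2

section Euclidean

variable {d : ℕ}

theorem cvxOrder_map_of_isStationaryProjection {μ : Measure (Euc d)} [IsFiniteMeasure μ]
    (hμ : Integrable id μ) {Γ : Finset (Euc d)} {proj : Euc d → Euc d} (hproj : Measurable proj)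
    (hmem : ∀ x, proj x ∈ Γ) (hstat : IsStationaryProjection μ proj) :
    cvxOrder (μ.map proj) μ := by
  rintro φ hφ ⟨C, hC⟩
  have hφc : Continuous φ := continuousOn_univ.1 (hφ.continuousOn isOpen_univ)
  have hφi : Integrable φ μ :=
    ((hμ.norm.const_mul C).add (integrable_const C)).mono' hφc.aestronglyMeasurable
      (.of_forall fun x => (hC x).trans_eq (by simp only [Pi.add_apply, id]; ring))
  have hφproj : Integrable (fun x => φ (proj x)) μ :=
    .of_bound (hφc.measurable.comp hproj).aestronglyMeasurable (∑ a ∈ Γ, ‖φ a‖)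
      (.of_forall fun x => Finset.single_le_sum (f := (‖φ ·‖)) (fun _ _ => norm_nonneg _) (hmem x))
  rw [integral_map hproj.aemeasurable hφc.aestronglyMeasurable,
    integral_eq_sum_setIntegral_fiber hproj hmem hφproj,
    integral_eq_sum_setIntegral_fiber hproj hmem hφi]
  refine Finset.sum_le_sum fun a _ => ?_
  have hjensen := hφ.measureReal_univ_mul_le_integral hφc hμ.integrableOn hφi.integrableOn
    (a := a) (by rw [measureReal_restrict_apply_univ]; exact hstat a)
  rw [measureReal_restrict_apply_univ] at hjensen
  rwa [setIntegral_congr_fun (hproj (measurableSet_singleton a)) fun x hx =>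
    congrArg φ (Set.mem_singleton_iff.1 hx), setIntegral_const, smul_eq_mul]

theorem Wp_nonneg (p : ℝ) (μ ν : Measure (Euc d)) : 0 ≤ Wp p μ ν := by
  refine Real.sInf_nonneg ?_
  rintro _ ⟨M, -, -, -, rfl⟩
  exact Real.rpow_nonneg (integral_nonneg fun z => Real.rpow_nonneg (norm_nonneg _) _) _

theorem Wp_le_of_coupling {p : ℝ} {μ ν : Measure (Euc d)} {M : Measure (Euc d × Euc d)}
    [IsProbabilityMeasure M] (hM₁ : M.fst = μ) (hM₂ : M.snd = ν) :
    Wp p μ ν ≤ (∫ z, ‖z.1 - z.2‖ ^ p ∂M) ^ (1 / p) := by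
  refine csInf_le ⟨0, ?_⟩ ⟨M, inferInstance, hM₁, hM₂, rfl⟩
  rintro _ ⟨M', -, -, -, rfl⟩
  exact Real.rpow_nonneg (integral_nonneg fun z => Real.rpow_nonneg (norm_nonneg _) _) _

theorem le_Wp_of_forall_coupling {p r : ℝ} {μ ν : Measure (Euc d)} [IsProbabilityMeasure μ]
    [IsProbabilityMeasure ν]
    (h : ∀ M : Measure (Euc d × Euc d), IsProbabilityMeasure M → M.fst = μ → M.snd = ν →
      r ≤ (∫ z, ‖z.1 - z.2‖ ^ p ∂M) ^ (1 / p)) :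
    r ≤ Wp p μ ν := by
  refine le_csInf ⟨_, μ.prod ν, inferInstance, Measure.fst_prod, Measure.snd_prod, rfl⟩ ?_
  rintro _ ⟨M, hM, hM₁, hM₂, rfl⟩
  exact h M hM hM₁ hM₂

theorem e2_le_e2_iff {Γ Γ' : Finset (Euc d)} {μ : Measure (Euc d)} :
    e2 Γ μ ≤ e2 Γ' μ ↔ ∫ x, infDist x Γ ^ 2 ∂μ ≤ ∫ x, infDist x Γ' ^ 2 ∂μ :=
  Real.rpow_le_rpow_iff (integral_nonneg fun _ => sq_nonneg _)
    (integral_nonneg fun _ => sq_nonneg _) (by norm_num)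

theorem e2N_le_e2 {N : ℕ} {Γ : Finset (Euc d)} (hΓ : Γ.Nonempty) (hcard : Γ.card ≤ N)
    (μ : Measure (Euc d)) : e2N N μ ≤ e2 Γ μ := by
  refine csInf_le ⟨0, ?_⟩ ⟨Γ, hΓ, hcard, rfl⟩
  rintro _ ⟨Γ', -, -, rfl⟩
  exact Real.rpow_nonneg (integral_nonneg fun _ => sq_nonneg _) _

theorem e2_le_Wp_two {μ ν : Measure (Euc d)} [IsProbabilityMeasure μ] [IsProbabilityMeasure ν]
    (hμ : MemLp id 2 μ) {s : Finset (Euc d)} (hν : ν (s : Set (Euc d))ᶜ = 0) :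
    e2 s μ ≤ Wp 2 μ ν := by
  refine le_Wp_of_forall_coupling fun M _ hM₁ hM₂ => Real.rpow_le_rpow
    (integral_nonneg fun _ => sq_nonneg _) ?_ (by norm_num)
  simpa only [Real.rpow_two] using integral_infDist_sq_le_integral_norm_sub_sq hμ hν hM₁ hM₂

theorem Wp_two_map_le_e2 {μ : Measure (Euc d)} [IsProbabilityMeasure μ] {Γ : Finset (Euc d)}
    {proj : Euc d → Euc d} (hproj : Measurable proj)
    (hdist : ∀ x, dist x (proj x) = infDist x Γ) :
    Wp 2 μ (μ.map proj) ≤ e2 Γ μ := by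
  have hgraph : Measurable fun x => (x, proj x) := measurable_id.prodMk hproj
  have := Measure.isProbabilityMeasure_map (μ := μ) hgraph.aemeasurable
  have hM₁ : (μ.map fun x => (x, proj x)).fst = μ := by
    rw [Measure.fst_map_prodMk hproj, Measure.map_id']
  refine (Wp_le_of_coupling hM₁ (Measure.snd_map_prodMk measurable_id)).trans_eq ?_
  simp only [Real.rpow_two]
  rw [integral_map hgraph.aemeasurable (by fun_prop : Continuous fun z :
    Euc d × Euc d => ‖z.1 - z.2‖ ^ 2).aestronglyMeasurable]
  simp only [e2, ← hdist, dist_eq_norm]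

end Euclidean

theorem stmt1_general {d : ℕ} (N : ℕ)
    (μ : Measure (Euc d)) [IsProbabilityMeasure μ]
    (hmom : Integrable (fun x => ‖x‖ ^ (2:ℝ)) μ)
    (Γ : Finset (Euc d)) (hcard : Γ.card ≤ N)
    (hopt : e2 Γ μ = e2N N μ)
    (proj : Euc d → Euc d) (hprojmeas : Measurable proj)
    (hprojmem : ∀ x, proj x ∈ Γ)
    (hprojdist : ∀ x, dist x (proj x) = infDist x (Γ : Set (Euc d))) :
    supportedOnAtMost (μ.map proj) N
    ∧ cvxOrder (μ.map proj) μ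
    ∧ Wp 2 μ (μ.map proj)
        = sInf { r | ∃ ν : Measure (Euc d), IsProbabilityMeasure ν ∧ supportedOnAtMost ν N ∧
            cvxOrder ν μ ∧ r = Wp 2 μ ν } := by
  have hμ : MemLp id 2 μ :=
    (memLp_two_iff_integrable_sq_norm aestronglyMeasurable_id).2 (by simpa using hmom)
  have hΓopt : ∀ Γ' : Finset (Euc d), Γ'.Nonempty → Γ'.card ≤ N → e2 Γ μ ≤ e2 Γ' μ :=
    fun Γ' hΓ' hcard' => hopt ▸ e2N_le_e2 hΓ' hcard' μ
  have hsupp : μ.map proj (Γ : Set (Euc d))ᶜ = 0 :=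
    Measure.map_compl_eq_zero_of_forall_mem hprojmeas Γ.finite_toSet.measurableSet hprojmem
  have hstat : IsStationaryProjection μ proj :=
    isStationaryProjection_of_forall_integral_infDist_sq_le hμ hprojmeas hprojmem hprojdist
      fun Γ' hΓ' hcard' => e2_le_e2_iff.1 (hΓopt Γ' hΓ' (hcard'.trans hcard))
  have hcvx : cvxOrder (μ.map proj) μ :=
    cvxOrder_map_of_isStationaryProjection (hμ.integrable one_le_two) hprojmeas hprojmem hstat
  have hadmissible : Wp 2 μ (μ.map proj) ∈ { r | ∃ ν : Measure (Euc d), IsProbabilityMeasure ν ∧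
      supportedOnAtMost ν N ∧ cvxOrder ν μ ∧ r = Wp 2 μ ν } :=
    ⟨μ.map proj, Measure.isProbabilityMeasure_map hprojmeas.aemeasurable, ⟨Γ, hcard, hsupp⟩,
      hcvx, rfl⟩
  refine ⟨⟨Γ, hcard, hsupp⟩, hcvx, le_antisymm ?_ ?_⟩
  · refine le_csInf ⟨_, hadmissible⟩ ?_
    rintro _ ⟨ν, hν, ⟨s, hs, hsν⟩, -, rfl⟩
    have hsne : s.Nonempty := Finset.nonempty_iff_ne_empty.2 fun hs0 => by
      simp [hs0] at hsν
    calc Wp 2 μ (μ.map proj) ≤ e2 Γ μ := Wp_two_map_le_e2 hprojmeas hprojdist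
      _ ≤ e2 s μ := hΓopt s hsne hs
      _ ≤ Wp 2 μ ν := e2_le_Wp_two hμ hsν
  · refine csInf_le ⟨0, ?_⟩ hadmissible
    rintro _ ⟨ν, -, -, -, rfl⟩
    exact Wp_nonneg 2 μ ν

/-- If `Γ` is an `L²`-optimal quantization grid of `μ` at level `N`, then the
pushforward `μ̂` of `μ` under a nearest-neighbour projection onto `Γ` is supported on at most
`N` points, is dominated by `μ` in the convex order, and is a quadratic-Wasserstein projection
of `μ` on the set of probability measures dominated by `μ` in the convex order and supported
on at most `N` points. -/
theorem stmt1 {d : ℕ} (N : ℕ)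
    (μ : Measure (Euc d)) [IsProbabilityMeasure μ]
    (hmom : Integrable (fun x => ‖x‖ ^ (2:ℝ)) μ)
    (Γ : Finset (Euc d)) (hne : Γ.Nonempty) (hcard : Γ.card ≤ N)
    (hopt : e2 Γ μ = e2N N μ)
    (proj : Euc d → Euc d) (hprojmeas : Measurable proj)
    (hprojmem : ∀ x, proj x ∈ Γ)
    (hprojdist : ∀ x, dist x (proj x) = infDist x (Γ : Set (Euc d))) :
    supportedOnAtMost (μ.map proj) N
    ∧ cvxOrder (μ.map proj) μ
    ∧ Wp 2 μ (μ.map proj)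
        = sInf { r | ∃ ν : Measure (Euc d), IsProbabilityMeasure ν ∧ supportedOnAtMost ν N ∧
            cvxOrder ν μ ∧ r = Wp 2 μ ν } :=
  stmt1_general N μ hmom Γ hcard hopt proj hprojmeas hprojmem hprojdist

end
end

section
/- Let Z be an integrable centered ℝ^q-valued random vector and A ⊂ ℝ^q a Borel set. Set Z^A = Z·1_{{Z ∈ A}}. If E Z^A = 0, then Z^A ≤_cvx Z. -/
/-!
On `{Z ∈ A}` the two vectors coincide, so only the complement matters. There `Z^A = 0`, while
`Z` has vanishing integral over `{Z ∉ A}` because both `Z` and `Z^A` are centered. Jensen's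
inequality on `{Z ∉ A}` therefore gives `P(Z ∉ A) φ 0 ≤ ∫_{Z ∉ A} φ ∘ Z`.
-/

open MeasureTheory ProbabilityTheory
open scoped ENNReal

noncomputable section

/-- Convex order `X ≤_cvx Y` between random vectors (tested on convex functions with linear
growth). -/
def cvxLE {Ω F : Type*} [MeasurableSpace Ω] [NormedAddCommGroup F] [NormedSpace ℝ F]
    (P : Measure Ω) (X Y : Ω → F) : Prop :=
  ∀ φ : F → ℝ, ConvexOn ℝ Set.univ φ → (∃ C : ℝ, ∀ x, |φ x| ≤ C * (1 + ‖x‖)) →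
    ∫ ω, φ (X ω) ∂P ≤ ∫ ω, φ (Y ω) ∂P

section

variable {Ω : Type*} {mΩ : MeasurableSpace Ω} {μ : Measure Ω} [IsFiniteMeasure μ]

lemma integral_comp_indicator {E : Type*} [Zero E] {X : Ω → E} {φ : E → ℝ} {s : Set Ω}
    (hs : MeasurableSet s) (hφX : Integrable (fun ω => φ (X ω)) μ) :
    ∫ ω, φ (s.indicator X ω) ∂μ = ∫ ω in s, φ (X ω) ∂μ + μ.real sᶜ * φ 0 := by
  classical
  have hpiecewise :
      (fun ω => φ (s.indicator X ω)) = s.piecewise (fun ω => φ (X ω)) fun _ => φ 0 := by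
    funext ω
    by_cases h : ω ∈ s <;> simp [h]
  rw [hpiecewise, integral_piecewise hs hφX.integrableOn (integrable_const _).integrableOn,
    setIntegral_const, smul_eq_mul]

variable {F : Type*} [NormedAddCommGroup F] {X : Ω → F} {φ : F → ℝ}

lemma MeasureTheory.Integrable.comp_of_abs_le_linear {C : ℝ} (hX : Integrable X μ)
    (hφ : Continuous φ) (hφC : ∀ x, |φ x| ≤ C * (1 + ‖x‖)) :
    Integrable (fun ω => φ (X ω)) μ :=
  (((integrable_const 1).add hX.norm).const_mul C).mono' (hφ.comp_aestronglyMeasurable hX.1)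
    (ae_of_all _ fun ω => by simpa only [Pi.add_apply, Real.norm_eq_abs] using hφC (X ω))

variable [NormedSpace ℝ F]

lemma ConvexOn.measureReal_univ_mul_le_integral_of_integral_eq_zero [CompleteSpace F]
    (hφ : ConvexOn ℝ Set.univ φ) (hφc : Continuous φ) (hX : Integrable X μ)
    (hφX : Integrable (fun ω => φ (X ω)) μ) (hX0 : ∫ ω, X ω ∂μ = 0) :
    μ.real Set.univ * φ 0 ≤ ∫ ω, φ (X ω) ∂μ := by
  rcases eq_zero_or_neZero μ with rfl | _
  · simp
  have hJensen := hφ.map_average_le hφc.continuousOn isClosed_univ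
    (ae_of_all _ fun _ => Set.mem_univ _) hX hφX
  rw [average_eq, hX0, smul_zero, average_eq, smul_eq_mul] at hJensen
  calc μ.real Set.univ * φ 0
      ≤ μ.real Set.univ * ((μ.real Set.univ)⁻¹ * ∫ ω, φ (X ω) ∂μ) := by gcongr
    _ = ∫ ω, φ (X ω) ∂μ := mul_inv_cancel_left₀ measureReal_univ_pos.ne' _

theorem cvxLE_indicator_of_setIntegral_compl_eq_zero [FiniteDimensional ℝ F] {B : Set Ω}
    (hB : MeasurableSet B) (hX : Integrable X μ) (hBc : ∫ ω in Bᶜ, X ω ∂μ = 0) :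
    cvxLE μ (B.indicator X) X := by
  rintro φ hφ ⟨C, hC⟩
  have hφc : Continuous φ := continuousOn_univ.mp (hφ.continuousOn isOpen_univ)
  have hφX := hX.comp_of_abs_le_linear hφc hC
  have hJensen := hφ.measureReal_univ_mul_le_integral_of_integral_eq_zero hφc hX.restrict
    hφX.restrict hBc
  rw [measureReal_restrict_apply_univ] at hJensen
  rw [integral_comp_indicator hB hφX, ← integral_add_compl hB hφX]
  gcongr

end

/-- **Truncation lemma.** If `Z` is an integrable centered random vector and
`Z^A = Z·1_{Z ∈ A}` is still centered, then `Z^A ≤_cvx Z`. -/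
theorem stmt11 {Ω : Type*} [mΩ : MeasurableSpace Ω] (P : Measure Ω) [IsProbabilityMeasure P]
    (q : ℕ) (Z : Ω → Euc q)
    (hZm : Measurable Z) (hZint : Integrable Z P)
    (hZcent : ∫ ω, Z ω ∂P = 0)
    (A : Set (Euc q)) (hA : MeasurableSet A)
    (hcent : ∫ ω, Set.indicator A id (Z ω) ∂P = 0) :
    cvxLE P (fun ω => Set.indicator A id (Z ω)) Z := by
  have hB : MeasurableSet (Z ⁻¹' A) := hZm hA
  have hind : (fun ω => Set.indicator A id (Z ω)) = (Z ⁻¹' A).indicator Z :=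
    funext fun ω => (Set.indicator_comp_right (g := id) Z).symm
  rw [hind, integral_indicator hB] at hcent
  rw [hind]
  refine cvxLE_indicator_of_setIntegral_compl_eq_zero hB hZint ?_
  simpa only [hcent, hZcent, zero_add] using integral_add_compl hB hZint

end
end

section
/- Let Z be an integrable ℝ^q-valued random vector, and for i = 1,…,q let Z_{−i} denote the vector obtained from Z by removing the i-th coordinate. Assume the vanishing conditional expectations property: E(Z_i | Z_{−i}) = 0 a.s. for each i = 1,…,q. Then for all real numbers with 0 ≤ λ_i ≤ ℓ_i (i = 1,…,q), Diag(λ_1,…,λ_q) Z ≤_cvx Diag(ℓ_1,…,ℓ_q) Z, where Diag(λ_1,…,λ_q) is the q×q diagonal matrix with diagonal entries λ_1,…,λ_q. -/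
open MeasureTheory ProbabilityTheory
open scoped ENNReal

noncomputable section

open Set

theorem cvxLE_trans {Ω F : Type*} [MeasurableSpace Ω] [NormedAddCommGroup F] [NormedSpace ℝ F]
    {P : Measure Ω} {X Y Z : Ω → F} (hXY : cvxLE P X Y) (hYZ : cvxLE P Y Z) : cvxLE P X Z :=
  fun φ hφ hgrowth => (hXY φ hφ hgrowth).trans (hYZ φ hφ hgrowth)

theorem ConvexOn.comp_add_smul {F : Type*} [AddCommGroup F] [Module ℝ F] {φ : F → ℝ}
    (hφ : ConvexOn ℝ univ φ) (a v : F) : ConvexOn ℝ univ fun s : ℝ => φ (a + s • v) := by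
  have h := (hφ.translate_right a).comp_linearMap (LinearMap.toSpanSingleton ℝ F v)
  simp only [preimage_univ] at h
  exact h

theorem convexOn_integral {Ω E : Type*} {mΩ : MeasurableSpace Ω} [AddCommGroup E] [Module ℝ E]
    {P : Measure Ω} {s : Set E} {f : Ω → E → ℝ} (hs : Convex ℝ s)
    (hf : ∀ ω, ConvexOn ℝ s (f ω)) (hint : ∀ x ∈ s, Integrable (fun ω => f ω x) P) :
    ConvexOn ℝ s fun x => ∫ ω, f ω x ∂P := by
  refine ⟨hs, fun x hx y hy a b ha hb hab => ?_⟩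
  calc ∫ ω, f ω (a • x + b • y) ∂P ≤ ∫ ω, (a * f ω x + b * f ω y) ∂P :=
        integral_mono (hint _ (hs hx hy ha hb hab))
          (((hint x hx).const_mul a).add ((hint y hy).const_mul b))
          fun ω => (hf ω).2 hx hy ha hb hab
    _ = a * ∫ ω, f ω x ∂P + b * ∫ ω, f ω y ∂P := by
        rw [integral_add ((hint x hx).const_mul a) ((hint y hy).const_mul b), integral_const_mul,
          integral_const_mul]

theorem MeasureTheory.Integrable.comp_of_abs_le_mul_one_add_norm {Ω F : Type*}
    {mΩ : MeasurableSpace Ω} [NormedAddCommGroup F] {P : Measure Ω} [IsFiniteMeasure P]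
    {φ : F → ℝ} (hφ : Continuous φ) {C : ℝ} (hC : ∀ x, |φ x| ≤ C * (1 + ‖x‖)) {X : Ω → F}
    (hX : Integrable X P) :
    Integrable (fun ω => φ (X ω)) P :=
  ((integrable_const C).add (hX.norm.const_mul C)).mono' (hφ.comp_aestronglyMeasurable hX.1)
    (ae_of_all _ fun ω => by simpa [mul_add] using hC (X ω))

theorem integral_apply_zero_le_of_condExp_eq_zero {Ω β : Type*} {mΩ : MeasurableSpace Ω}
    [MeasurableSpace β] {P : Measure Ω} [IsFiniteMeasure P] {W : Ω → β} {Y : Ω → ℝ}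
    (hW : Measurable W) (hY : Integrable Y P)
    (hcond : P[Y | MeasurableSpace.comap W inferInstance] =ᵐ[P] 0)
    {ψ : β × ℝ → ℝ} (hψ : StronglyMeasurable ψ) (hψconv : ∀ w, ConvexOn ℝ univ fun y => ψ (w, y))
    (hint₀ : Integrable (fun ω => ψ (W ω, 0)) P) (hint : Integrable (fun ω => ψ (W ω, Y ω)) P) :
    ∫ ω, ψ (W ω, 0) ∂P ≤ ∫ ω, ψ (W ω, Y ω) ∂P := by
  set κ := condDistrib Y W P
  have hYm : AEMeasurable Y P := hY.aemeasurable
  have hmean : ∀ᵐ ω ∂P, ∫ y, y ∂κ (W ω) = 0 :=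
    (condExp_ae_eq_integral_condDistrib' hW hY).symm.trans hcond
  have hid_int : ∀ᵐ ω ∂P, Integrable (fun y => y) (κ (W ω)) := by
    refine Integrable.condDistrib_ae (f := Prod.snd) hW.aemeasurable hYm ?_
    rwa [integrable_map_measure measurable_snd.aestronglyMeasurable (hW.aemeasurable.prodMk hYm)]
  have hψ_int : ∀ᵐ ω ∂P, Integrable (fun y => ψ (W ω, y)) (κ (W ω)) := by
    refine Integrable.condDistrib_ae hW.aemeasurable hYm ?_
    rwa [integrable_map_measure hψ.aestronglyMeasurable (hW.aemeasurable.prodMk hYm)]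
  have hcondψ : P[fun ω => ψ (W ω, Y ω) | MeasurableSpace.comap W inferInstance]
      =ᵐ[P] fun ω => ∫ y, ψ (W ω, y) ∂κ (W ω) :=
    condExp_prod_ae_eq_integral_condDistrib hW hYm hψ hint
  have hjensen : ∀ᵐ ω ∂P, ψ (W ω, 0) ≤ ∫ y, ψ (W ω, y) ∂κ (W ω) := by
    filter_upwards [hmean, hid_int, hψ_int] with ω hω hid hψω
    rw [← hω]
    exact (hψconv (W ω)).map_integral_le ((hψconv (W ω)).continuousOn isOpen_univ) isClosed_univ
      (ae_of_all _ fun _ => mem_univ _) hid hψω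
  calc ∫ ω, ψ (W ω, 0) ∂P ≤ ∫ ω, ∫ y, ψ (W ω, y) ∂κ (W ω) ∂P :=
        integral_mono_ae hint₀ (integrable_condExp.congr hcondψ) hjensen
    _ = ∫ ω, P[fun ω => ψ (W ω, Y ω) | MeasurableSpace.comap W inferInstance] ω ∂P :=
        (integral_congr_ae hcondψ).symm
    _ = ∫ ω, ψ (W ω, Y ω) ∂P := integral_condExp hW.comap_le

theorem cvxLE_add_smul_of_condExp_eq_zero {Ω β F : Type*} {mΩ : MeasurableSpace Ω}
    [MeasurableSpace β] [NormedAddCommGroup F] [NormedSpace ℝ F] [FiniteDimensional ℝ F]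
    {P : Measure Ω} [IsFiniteMeasure P] {W : Ω → β} {Y : Ω → ℝ} (hW : Measurable W)
    (hY : Integrable Y P)
    (hcond : P[Y | MeasurableSpace.comap W inferInstance] =ᵐ[P] 0)
    {g : β → F} (hg : StronglyMeasurable g) (hgW : Integrable (fun ω => g (W ω)) P) (v : F)
    {s t : ℝ} (hs : 0 ≤ s) (hst : s ≤ t) :
    cvxLE P (fun ω => g (W ω) + (s * Y ω) • v) (fun ω => g (W ω) + (t * Y ω) • v) := by
  rintro φ hφ ⟨C, hC⟩
  have hφc : Continuous φ := continuousOn_univ.mp (hφ.continuousOn isOpen_univ)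
  have hint : ∀ r : ℝ, Integrable (fun ω => φ (g (W ω) + (r * Y ω) • v)) P := fun r =>
    (hgW.add ((hY.const_mul r).smul_const v)).comp_of_abs_le_mul_one_add_norm hφc hC
  have hconv : ConvexOn ℝ univ fun r => ∫ ω, φ (g (W ω) + (r * Y ω) • v) ∂P := by
    refine convexOn_integral convex_univ (fun ω => ?_) fun r _ => hint r
    simpa [mul_comm, mul_smul] using hφ.comp_add_smul (g (W ω)) (Y ω • v)
  have hzero_le : ∀ r, ∫ ω, φ (g (W ω) + (0 * Y ω) • v) ∂P
      ≤ ∫ ω, φ (g (W ω) + (r * Y ω) • v) ∂P := by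
    intro r
    have hψ : StronglyMeasurable fun p : β × ℝ => φ (g p.1 + (r * p.2) • v) :=
      hφc.comp_stronglyMeasurable ((hg.comp_measurable measurable_fst).add
        ((measurable_snd.const_mul r).stronglyMeasurable.smul_const v))
    have hψconv : ∀ w, ConvexOn ℝ univ fun y => φ (g w + (r * y) • v) := fun w => by
      simpa [mul_smul, smul_comm r] using hφ.comp_add_smul (g w) (r • v)
    simpa using integral_apply_zero_le_of_condExp_eq_zero hW hY hcond hψ hψconv
      (by simpa using hint 0) (hint r)
  rcases hs.eq_or_lt with rfl | hs
  · exact hzero_le t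
  · exact hconv.le_right_of_left_le'' (mem_univ 0) (mem_univ t) hs hst (hzero_le s)

theorem cvxLE_update_of_condExp_eq_zero {Ω : Type*} {mΩ : MeasurableSpace Ω} {P : Measure Ω}
    [IsFiniteMeasure P] {q : ℕ} {Z : Ω → Euc q} (hZm : Measurable Z) (hZint : Integrable Z P)
    {i : Fin q}
    (hcond : P[(fun ω => Z ω i) |
        MeasurableSpace.comap (fun ω => (fun j : {j : Fin q // j ≠ i} => Z ω j.1))
          inferInstance] =ᵐ[P] 0)
    (c : Fin q → ℝ) {x : ℝ} (h₀ : 0 ≤ c i) (hx : c i ≤ x) :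
    cvxLE P (fun ω => (WithLp.toLp 2 (fun k => c k * Z ω k) : Euc q))
      (fun ω => (WithLp.toLp 2 (fun k => Function.update c i x k * Z ω k) : Euc q)) := by
  set W := fun ω => (fun j : {j : Fin q // j ≠ i} => Z ω j.1)
  set g : ({j : Fin q // j ≠ i} → ℝ) → Euc q :=
    fun w => WithLp.toLp 2 fun k => if h : k = i then 0 else c k * w ⟨k, h⟩
  have hW : Measurable W := by fun_prop
  have hg : StronglyMeasurable g := by
    refine Continuous.stronglyMeasurable ?_
    refine (PiLp.continuous_toLp 2 _).comp (continuous_pi fun k => ?_)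
    split_ifs with h
    · exact continuous_const
    · exact (continuous_apply _).const_mul _
  have hgW : Integrable (fun ω => g (W ω)) P := by
    refine integrable_piLp_iff.mpr fun k => ?_
    by_cases h : k = i
    · simp [g, h]
    · simpa [g, W, h] using (hZint.eval_piLp k).const_mul (c k)
  have hdecomp : ∀ c' : Fin q → ℝ, (∀ k ≠ i, c' k = c k) → ∀ ω,
      (WithLp.toLp 2 (fun k => c' k * Z ω k) : Euc q)
        = g (W ω) + (c' i * Z ω i) • EuclideanSpace.single i 1 := by
    intro c' hc' ω
    ext k
    by_cases h : k = i
    · subst h; simp [g]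
    · simp [g, W, h, hc' k h]
  have h := cvxLE_add_smul_of_condExp_eq_zero hW (hZint.eval_piLp i) hcond hg hgW
    (EuclideanSpace.single i 1) h₀ hx
  rwa [funext (hdecomp c fun _ _ => rfl),
    funext (hdecomp _ fun k hk => Function.update_of_ne hk _ _), Function.update_self]

/-- If `E(Z_i | Z_{-i}) = 0` a.s. for each coordinate `i` (vanishing
conditional expectations) and `0 ≤ λ_i ≤ ℓ_i`, then
`Diag(λ₁,…,λ_q) Z ≤_cvx Diag(ℓ₁,…,ℓ_q) Z`. -/
theorem stmt12 {Ω : Type*} [mΩ : MeasurableSpace Ω] (P : Measure Ω) [IsProbabilityMeasure P]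
    (q : ℕ) (Z : Ω → Euc q)
    (hZm : Measurable Z) (hZint : Integrable Z P)
    (hvanish : ∀ i : Fin q,
      P[(fun ω => Z ω i) |
          MeasurableSpace.comap (fun ω => (fun j : {j : Fin q // j ≠ i} => Z ω j.1))
            inferInstance]
        =ᵐ[P] (0 : Ω → ℝ))
    (lam ell : Fin q → ℝ) (hle : ∀ i, 0 ≤ lam i ∧ lam i ≤ ell i) :
    cvxLE P (fun ω => (WithLp.toLp 2 (fun i => lam i * Z ω i) : Euc q))
      (fun ω => (WithLp.toLp 2 (fun i => ell i * Z ω i) : Euc q)) := by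
  classical
  have key : ∀ S : Finset (Fin q),
      cvxLE P (fun ω => (WithLp.toLp 2 (fun i => lam i * Z ω i) : Euc q))
        (fun ω => (WithLp.toLp 2 (fun i => S.piecewise ell lam i * Z ω i) : Euc q)) := by
    intro S
    induction S using Finset.induction_on with
    | empty =>
      rw [Finset.piecewise_empty]
      exact fun _ _ _ => le_rfl
    | insert i S hi ih =>
      have hlam : S.piecewise ell lam i = lam i := Finset.piecewise_eq_of_notMem _ _ _ hi
      rw [Finset.piecewise_insert]
      exact cvxLE_trans ih (cvxLE_update_of_condExp_eq_zero hZm hZint (hvanish i) _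
        (hlam ▸ (hle i).1) (hlam ▸ (hle i).2))
  simpa using key Finset.univ

end
end
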